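/- Suppose X is nonempty and connected and every panel P_i is nonempty. Then the natural (ℤ/2)^m-action on M(X, λ) permutes the connected components of M(X, λ) transitively; consequently all connected components of M(X, λ) are pairwise homeomorphic, and the connected components are precisely the sets θ_λ(X × (g + L_λ)) for g ∈ (ℤ/2)^m. -/

import Mathlib

open Set Relation

/-- An involutive panel structure on a topological space `X` with `k` panels. -/
structure PanelStructure (X : Type*) [TopologicalSpace X] (k : ℕ) where
  P : Fin k → Set X
  isClosed : ∀ i, IsClosed (P i)
  τ : Fin k → X → X
  continuousOn : ∀ i, ContinuousOn (τ i) (P i)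
  mapsTo : ∀ i, Set.MapsTo (τ i) (P i) (P i)
  invol : ∀ i, ∀ x ∈ P i, τ i (τ i x) = x
  interMapsTo : ∀ i j, Set.MapsTo (τ i) (P i ∩ P j) (P i ∩ P j)
  comm : ∀ i j, ∀ x ∈ P i ∩ P j, τ i (τ j x) = τ j (τ i x)

/-- The additive group `(ℤ/2)^m`, with the discrete topology. -/
abbrev Z2 (m : ℕ) : Type := Fin m → ZMod 2

instance (m : ℕ) : TopologicalSpace (Z2 m) := ⊥
instance (m : ℕ) : DiscreteTopology (Z2 m) := ⟨rfl⟩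

variable {X : Type*} [TopologicalSpace X] {k m : ℕ}

/-- The basic gluing relation `(x, g) ∼ (τᵢ x, g + λ i)` for `x ∈ Pᵢ`. -/
def glueRel (S : PanelStructure X k) {G : Type*} [AddGroup G] (lam : Fin k → G)
    (p q : X × G) : Prop :=
  ∃ i, p.1 ∈ S.P i ∧ q.1 = S.τ i p.1 ∧ q.2 = p.2 + lam i

/-- The equivalence relation generated by the gluing relation. -/
def glueSetoid (S : PanelStructure X k) {G : Type*} [AddGroup G] (lam : Fin k → G) :
    Setoid (X × G) :=
  EqvGen.setoid (glueRel S lam)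

/-- The glue-back construction `M(X, λ)`, as a quotient of `X × G`
(with `G` carrying its own topology, discrete in the case `G = Z2 m`). -/
abbrev GlueBack (S : PanelStructure X k) {G : Type*} [AddGroup G] (lam : Fin k → G) :
    Type _ :=
  Quotient (glueSetoid S lam)

/-- The class `[(x, g)]` in the glue-back construction. -/
abbrev glueMk (S : PanelStructure X k) {G : Type*} [AddGroup G] (lam : Fin k → G)
    (x : X) (g : G) : GlueBack S lam :=
  Quotient.mk (glueSetoid S lam) (x, g)

theorem eqvGen_map_of_map {α : Type*} {r : α → α → Prop} (f : α → α)
    (hf : ∀ a b, r a b → r (f a) (f b)) :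
    ∀ {a b : α}, EqvGen r a b → EqvGen r (f a) (f b) := by
  intro a b h
  induction h with
  | rel a b h => exact EqvGen.rel _ _ (hf _ _ h)
  | refl a => exact EqvGen.refl _
  | symm a b _ ih => exact EqvGen.symm _ _ ih
  | trans a b c _ _ ih₁ ih₂ => exact EqvGen.trans _ _ _ ih₁ ih₂

theorem glueRel_add (S : PanelStructure X k) {G : Type*} [AddGroup G] (lam : Fin k → G)
    (g : G) (a b : X × G) (h : glueRel S lam a b) :
    glueRel S lam (a.1, g + a.2) (b.1, g + b.2) := by
  obtain ⟨i, h₁, h₂, h₃⟩ := h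
  exact ⟨i, h₁, h₂, by rw [h₃, add_assoc]⟩

/-- The natural action of `G` on the glue-back construction:
`g · [(x, g₀)] = [(x, g + g₀)]`. -/
def glueAct (S : PanelStructure X k) {G : Type*} [AddGroup G] (lam : Fin k → G) (g : G) :
    GlueBack S lam → GlueBack S lam :=
  Quotient.map (fun p => (p.1, g + p.2))
    (fun a b (hab : EqvGen (glueRel S lam) a b) =>
      show EqvGen (glueRel S lam) _ _ from
        eqvGen_map_of_map (fun p => (p.1, g + p.2)) (glueRel_add S lam g) hab)

theorem glueAct_mk (S : PanelStructure X k) {G : Type*} [AddGroup G] (lam : Fin k → G)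
    (g : G) (x : X) (g₀ : G) :
    glueAct S lam g (glueMk S lam x g₀) = glueMk S lam x (g + g₀) := rfl

theorem glueAct_zero (S : PanelStructure X k) {G : Type*} [AddGroup G] (lam : Fin k → G)
    (p : GlueBack S lam) : glueAct S lam 0 p = p := by
  induction p using Quotient.ind with
  | _ a =>
    show Quotient.mk _ (a.1, 0 + a.2) = Quotient.mk _ a
    rw [zero_add]

theorem glueAct_add (S : PanelStructure X k) {G : Type*} [AddGroup G] (lam : Fin k → G)
    (g h : G) (p : GlueBack S lam) :
    glueAct S lam (g + h) p = glueAct S lam g (glueAct S lam h p) := by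
  induction p using Quotient.ind with
  | _ a =>
    show Quotient.mk _ (a.1, (g + h) + a.2) = Quotient.mk _ (a.1, g + (h + a.2))
    rw [add_assoc]

/-- Iterated application of the involutions:
`τ_{i_s}^{ε_s} ∘ ⋯ ∘ τ_{i_1}^{ε_1}` with the indices taken in increasing order. -/
def applyPanels (S : PanelStructure X k) (ε : Fin k → Bool) (x : X) : X :=
  (List.finRange k).foldl (fun y i => if ε i then S.τ i y else y) x

/-!
Gluing changes the second coordinate of `(x, g)` only by colours, so `[(x, g)] ↦ g + L_λ` is
a well-defined continuous map to the discrete set of cosets, and each of its fibres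
`θ_λ(X × (g + L_λ))` is clopen. Conversely such a fibre is connected: each slice
`θ_λ(X × {g})` is a continuous image of the connected space `X`, and a point `p ∈ Pᵢ`
identifies `(p, g)` with `(τᵢ p, g + λ i)`, joining the slices of `g` and `g + λ i`.
The action of `g` is a homeomorphism carrying the slice of `h` onto that of `g + h`, hence
permutes components transitively.
-/

theorem Homeomorph.image_connectedComponent {Y Z : Type*} [TopologicalSpace Y]
    [TopologicalSpace Z] (h : Y ≃ₜ Z) (y : Y) :
    h '' connectedComponent y = connectedComponent (h y) := by
  simpa [connectedComponentIn_univ] using h.image_connectedComponentIn (mem_univ y)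

theorem Submodule.coe_span_zmod_eq_closure {n : ℕ} {M : Type*} [AddCommGroup M]
    [Module (ZMod n) M] (s : Set M) :
    (Submodule.span (ZMod n) s : Set M) = AddSubgroup.closure s := by
  rw [← Submodule.span_int_eq_addSubgroupClosure,
    ← Submodule.restrictScalars_span ℤ (ZMod n) ZMod.intCast_surjective s]
  rfl

namespace GlueBack

variable {G : Type*} [AddGroup G] (S : PanelStructure X k) (lam : Fin k → G)

abbrev colorSubgroup : AddSubgroup G := AddSubgroup.closure (Set.range lam)

lemma coe_snd_eq_of_glueRel {a b : X × G} (h : glueRel S lam a b) :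
    (a.2 : G ⧸ colorSubgroup lam) = b.2 := by
  obtain ⟨i, -, -, hb⟩ := h
  rw [QuotientAddGroup.eq, hb, neg_add_cancel_left]
  exact AddSubgroup.subset_closure ⟨i, rfl⟩

def glueCoset : GlueBack S lam → G ⧸ colorSubgroup lam :=
  Quotient.lift (fun p => (p.2 : G ⧸ colorSubgroup lam))
    (Setoid.eqvGen_le (s := Setoid.ker _) fun _ _ h => coe_snd_eq_of_glueRel S lam h)

@[simp]
lemma glueCoset_glueMk (x : X) (g : G) : glueCoset S lam (glueMk S lam x g) = g := rfl

lemma glueCoset_preimage_eq_image (g : G) :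
    glueCoset S lam ⁻¹' {(g : G ⧸ colorSubgroup lam)} =
      Quotient.mk (glueSetoid S lam) '' (univ ×ˢ ((g + ·) '' (colorSubgroup lam : Set G))) := by
  have hfib :
      Quotient.mk (glueSetoid S lam) ⁻¹' (glueCoset S lam ⁻¹' {(g : G ⧸ colorSubgroup lam)})
        = univ ×ˢ ((g + ·) '' (colorSubgroup lam : Set G)) := by
    ext ⟨x, h⟩
    simpa using eq_comm.trans QuotientAddGroup.eq
  rw [← hfib, Set.image_preimage_eq _ Quotient.mk_surjective]

variable [TopologicalSpace G]

lemma continuous_glueCoset : Continuous (glueCoset S lam) :=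
  (QuotientAddGroup.continuous_mk.comp continuous_snd).quotient_lift _

lemma continuous_glueAct [ContinuousConstVAdd G G] (g : G) : Continuous (glueAct S lam g) :=
  (continuous_quot_mk.comp
    (continuous_fst.prodMk ((continuous_const_vadd g).comp continuous_snd))).quotient_lift _

def glueActHomeomorph [ContinuousConstVAdd G G] (g : G) : GlueBack S lam ≃ₜ GlueBack S lam where
  toFun := glueAct S lam g
  invFun := glueAct S lam (-g)
  left_inv p := by rw [← glueAct_add, neg_add_cancel, glueAct_zero]
  right_inv p := by rw [← glueAct_add, add_neg_cancel, glueAct_zero]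
  continuous_toFun := continuous_glueAct S lam g
  continuous_invFun := continuous_glueAct S lam (-g)

variable [ConnectedSpace X]

lemma connectedComponent_glueMk_eq (x y : X) (g : G) :
    connectedComponent (glueMk S lam x g) = connectedComponent (glueMk S lam y g) := by
  have hc : Continuous fun x : X => glueMk S lam x g :=
    continuous_quot_mk.comp (continuous_id.prodMk continuous_const)
  exact connectedComponent_eq <|
    (isConnected_range hc).subset_connectedComponent ⟨x, rfl⟩ ⟨y, rfl⟩

lemma connectedComponent_glueMk_add_lam {i : Fin k} (hi : (S.P i).Nonempty) (x : X) (g : G) :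
    connectedComponent (glueMk S lam x (g + lam i)) = connectedComponent (glueMk S lam x g) := by
  obtain ⟨p, hp⟩ := hi
  have hglue : glueMk S lam p g = glueMk S lam (S.τ i p) (g + lam i) :=
    Quotient.sound (EqvGen.rel _ _ ⟨i, hp, rfl, rfl⟩)
  rw [connectedComponent_glueMk_eq S lam x (S.τ i p), ← hglue, connectedComponent_glueMk_eq]

lemma connectedComponent_glueMk_add_of_mem (hP : ∀ i, (S.P i).Nonempty) (x : X) (g : G)
    {l : G} (hl : l ∈ colorSubgroup lam) :
    connectedComponent (glueMk S lam x (g + l)) = connectedComponent (glueMk S lam x g) := by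
  induction hl using AddSubgroup.closure_induction generalizing g with
  | mem l hl =>
    obtain ⟨i, rfl⟩ := hl
    exact connectedComponent_glueMk_add_lam S lam (hP i) x g
  | zero => rw [add_zero]
  | add a b _ _ iha ihb => rw [← add_assoc, ihb, iha]
  | neg a _ ih => rw [← ih, neg_add_cancel_right]

variable [DiscreteTopology G]

lemma connectedComponent_glueMk_eq_fiber (hP : ∀ i, (S.P i).Nonempty) (x : X) (g : G) :
    connectedComponent (glueMk S lam x g) =
      glueCoset S lam ⁻¹' {(g : G ⧸ colorSubgroup lam)} := by
  have : DiscreteTopology (G ⧸ colorSubgroup lam) :=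
    QuotientAddGroup.discreteTopology (isOpen_discrete _)
  refine subset_antisymm ?_ fun q hq => ?_
  · exact ((isClopen_discrete _).preimage (continuous_glueCoset S lam)).connectedComponent_subset
      rfl
  · induction q using Quotient.ind with | _ q =>
    obtain ⟨y, h⟩ := q
    obtain ⟨l, hl, rfl⟩ : ∃ l ∈ colorSubgroup lam, g + l = h :=
      ⟨-g + h, QuotientAddGroup.eq.mp hq.symm, add_neg_cancel_left g h⟩
    rw [← connectedComponent_glueMk_add_of_mem S lam hP x g hl,
      connectedComponent_glueMk_eq S lam x y]
    exact mem_connectedComponent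

end GlueBack

open GlueBack in
/-- If `X` is nonempty and connected and every panel is nonempty, then the
natural `(ℤ/2)^m`-action permutes the connected components of `M(X, λ)` transitively;
consequently all connected components are pairwise homeomorphic, and the connected
components are precisely the sets `θ_λ(X × (g + L_λ))` for `g ∈ (ℤ/2)^m`, where `L_λ` is
the subgroup generated by the colors `λ(1), …, λ(k)`. -/
theorem glueBack_components (S : PanelStructure X k) [ConnectedSpace X]
    (hP : ∀ i, (S.P i).Nonempty) (lam : Fin k → Z2 m) :
    (∀ p q : GlueBack S lam, ∃ g : Z2 m,
        glueAct S lam g '' connectedComponent p = connectedComponent q) ∧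
    (∀ p q : GlueBack S lam,
        Nonempty ((connectedComponent p : Set (GlueBack S lam)) ≃ₜ
          (connectedComponent q : Set (GlueBack S lam)))) ∧
    (∀ C : Set (GlueBack S lam),
        (∃ p : GlueBack S lam, C = connectedComponent p) ↔
        (∃ g : Z2 m, C = Quotient.mk (glueSetoid S lam) ''
          (Set.univ ×ˢ ((g + ·) ''
            ((Submodule.span (ZMod 2) (Set.range lam) : Submodule (ZMod 2) (Z2 m)) :
              Set (Z2 m)))))) := by
  have hcomp (x : X) (g : Z2 m) : connectedComponent (glueMk S lam x g) =
      Quotient.mk (glueSetoid S lam) '' (Set.univ ×ˢ ((g + ·) ''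
        (Submodule.span (ZMod 2) (Set.range lam) : Set (Z2 m)))) := by
    rw [connectedComponent_glueMk_eq_fiber S lam hP, glueCoset_preimage_eq_image,
      Submodule.coe_span_zmod_eq_closure]
  have htrans (p q : GlueBack S lam) :
      ∃ g : Z2 m, glueAct S lam g '' connectedComponent p = connectedComponent q := by
    induction p using Quotient.ind with | _ p =>
    induction q using Quotient.ind with | _ q =>
    refine ⟨q.2 - p.2, ?_⟩
    calc glueAct S lam (q.2 - p.2) '' connectedComponent ⟦p⟧
        = connectedComponent (glueMk S lam p.1 (q.2 - p.2 + p.2)) :=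
          (glueActHomeomorph S lam _).image_connectedComponent _
      _ = connectedComponent ⟦q⟧ := by
          rw [sub_add_cancel, connectedComponent_glueMk_eq S lam p.1 q.1]
  refine ⟨htrans, fun p q => ?_, fun C => ⟨?_, ?_⟩⟩
  · obtain ⟨g, hg⟩ := htrans p q
    exact ⟨((glueActHomeomorph S lam g).image _).trans (Homeomorph.setCongr hg)⟩
  · rintro ⟨p, rfl⟩
    induction p using Quotient.ind with | _ p =>
    exact ⟨p.2, hcomp p.1 p.2⟩
  · rintro ⟨g, rfl⟩
    obtain ⟨x⟩ := ‹ConnectedSpace X›.toNonempty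
    exact ⟨glueMk S lam x g, (hcomp x g).symm⟩
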